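/- arXiv:2010.14625 — 3 statements merged into one kernel-verified Lean document; each statement's English description precedes it below -/
import Mathlib

section
/- Let S be a finite metric space. If x : ℕ → S is an unpredictable sequence (in the sense of the Definition of unpredictability: Poisson stable under the shift, together with the separation property), then x is not eventually periodic. -/
/-- The metric δ(x,y) = Σ_{k=1}^∞ d(x_k,y_k)/2^k on the space F = ℕ → S of
sequences in S (here the k-th coordinate, k = 0,1,2,..., plays the role of
x_{k+1}, so it carries the weight 1/2^{k+1}). -/
noncomputable def seqDist {S : Type*} [MetricSpace S] (x y : ℕ → S) : ℝ :=
  ∑' k : ℕ, dist (x k) (y k) / 2 ^ (k + 1)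

/-- The shift map φ(x)_k = x_{k+1}. -/
def shift {S : Type*} (x : ℕ → S) : ℕ → S := fun k => x (k + 1)

open Filter in
/-- A sequence x : ℕ → S is unpredictable (Definition 2 of the paper): there are
ε₀ > 0 and sequences ζ_n, η_n of positive integers diverging to ∞ such that
x_{i+ζ_n} = x_i on every bounded interval of integers for n large, while
d(x_{ζ_n+η_n}, x_{η_n}) ≥ ε₀ for every n. -/
def Unpredictable {S : Type*} [MetricSpace S] (x : ℕ → S) : Prop :=
  ∃ (ε₀ : ℝ) (ζ η : ℕ → ℕ), 0 < ε₀ ∧ (∀ n, 0 < ζ n) ∧ (∀ n, 0 < η n) ∧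
    Tendsto ζ atTop atTop ∧ Tendsto η atTop atTop ∧
    (∀ N : ℕ, ∀ᶠ n in atTop, ∀ i ≤ N, x (i + ζ n) = x i) ∧
    (∀ n, ε₀ ≤ dist (x (ζ n + η n)) (x (η n)))

/-- An unpredictable sequence is not eventually periodic. -/
theorem unpredictable_not_eventually_periodic {S : Type*} [MetricSpace S] [Fintype S]
    (x : ℕ → S) (hx : Unpredictable x) :
    ¬ ∃ (N p : ℕ), 1 ≤ p ∧ ∀ k ≥ N, x (k + p) = x k := by
  rintro ⟨N, p, hp, hper⟩
  obtain ⟨ε₀, ζ, η, hε, hζpos, hηpos, hζtop, hηtop, hclose, hsep⟩ := hx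
  have hiter : ∀ m k, N ≤ k → x (k + m * p) = x k := by
    intro m
    induction m with
    | zero => simp
    | succ m ih =>
      intro k hk
      have h1 : k + (m + 1) * p = (k + m * p) + p := by ring
      rw [h1, hper _ (le_trans hk (Nat.le_add_right _ _)), ih k hk]
  obtain ⟨n, hcl, hη⟩ :=
    ((hclose (N + p)).and (hηtop.eventually_ge_atTop N)).exists
  set i := N + (η n - N) % p with hi
  have hiN : N ≤ i := Nat.le_add_right _ _
  have hile : i ≤ N + p := by
    have := Nat.mod_lt (η n - N) hp
    omega
  have hηeq : η n = i + ((η n - N) / p) * p := by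
    have h := Nat.div_add_mod (η n - N) p
    have h2 := Nat.mul_comm p ((η n - N) / p)
    rw [hi]
    omega
  have e1 : x (η n) = x i := by rw [hηeq]; exact hiter _ _ hiN
  have e2 : x (ζ n + η n) = x (i + ζ n) := by
    have h1 : ζ n + η n = (i + ζ n) + ((η n - N) / p) * p := by omega
    rw [h1]; exact hiter _ _ (by omega)
  have e3 : x (i + ζ n) = x i := hcl i hile
  have hd := hsep n
  rw [e1, e2, e3, dist_self] at hd
  linarith
end

section
/- There exists an unpredictable sequence with values in any finite metric space S having at least two elements: i.e., a sequence x : ℕ → S together with ε₀ > 0 and diverging sequences ζ_n, η_n of positive integers such that x_{i+ζ_n} = x_i for all i ≤ n, and d(x_{ζ_n+η_n}, x_{η_n}) ≥ ε₀ for all n. -/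
/-!
Take `x k = a` when the 2-adic valuation of `k` is even and `x k = b` otherwise. Adding `2 ^ L`
to a nonzero `i` with `v₂ i < L` does not change `v₂ i`, so for even `L > n` the shift by
`ζ = 2 ^ L` fixes `x` on `[0, n]`; but with `η = ζ`, `v₂ (ζ + η) = L + 1` is odd, so
`x (ζ + η) = b ≠ a = x η`.
-/

theorem padicValNat_add_prime_pow {p i L : ℕ} [Fact p.Prime] (hi : i ≠ 0)
    (hL : padicValNat p i < L) : padicValNat p (i + p ^ L) = padicValNat p i := by
  have hp : p.Prime := Fact.out
  have hlt : padicValRat p (i : ℚ) < padicValRat p ((p : ℚ) ^ L) := by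
    rw [padicValRat.of_nat, padicValRat.pow, padicValRat.self hp.one_lt, mul_one]
    exact_mod_cast hL
  have key := padicValRat.add_eq_of_lt (p := p) (by positivity) (by exact_mod_cast hi)
    (pow_ne_zero L (Nat.cast_ne_zero.mpr hp.ne_zero)) hlt
  exact_mod_cast key

theorem padicValNat_lt_self {p i : ℕ} (hi : i ≠ 0) : padicValNat p i < i :=
  (padicValNat_le_nat_log i).trans_lt (Nat.log_lt_self p hi)

section ParitySeq

variable {S : Type*} (a b : S)

noncomputable def twoAdicParitySeq (k : ℕ) : S :=
  if Even (padicValNat 2 k) then a else b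

theorem twoAdicParitySeq_two_pow (L : ℕ) :
    twoAdicParitySeq a b (2 ^ L) = if Even L then a else b := by
  rw [twoAdicParitySeq, padicValNat.prime_pow]

theorem twoAdicParitySeq_add_two_pow {i L : ℕ} (hL : Even L) (hi : i < L) :
    twoAdicParitySeq a b (i + 2 ^ L) = twoAdicParitySeq a b i := by
  rcases Nat.eq_zero_or_pos i with rfl | hi₀
  · simp [twoAdicParitySeq, hL]
  · have : Fact (Nat.Prime 2) := ⟨Nat.prime_two⟩
    rw [twoAdicParitySeq, twoAdicParitySeq, padicValNat_add_prime_pow hi₀.ne'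
      ((padicValNat_lt_self hi₀.ne').trans hi)]

end ParitySeq

open Filter in
theorem exists_unpredictable_general {S : Type*} [MetricSpace S] [Nontrivial S] :
    ∃ (x : ℕ → S) (ε₀ : ℝ) (ζ η : ℕ → ℕ), 0 < ε₀ ∧
      (∀ n, 0 < ζ n) ∧ (∀ n, 0 < η n) ∧
      Tendsto ζ atTop atTop ∧ Tendsto η atTop atTop ∧
      (∀ n, ∀ i ≤ n, x (i + ζ n) = x i) ∧
      (∀ n, ε₀ ≤ dist (x (ζ n + η n)) (x (η n))) := by
  obtain ⟨a, b, hab⟩ := exists_pair_ne S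
  set ζ : ℕ → ℕ := fun n => 2 ^ (2 * (n + 1))
  have hζ_pos (n : ℕ) : 0 < ζ n := by positivity
  have hζ_tendsto : Tendsto ζ atTop atTop :=
    tendsto_atTop_mono (fun n => (Nat.lt_two_pow_self (n := n)).le.trans
      (Nat.pow_le_pow_right two_pos (by omega))) tendsto_id
  refine ⟨twoAdicParitySeq a b, dist a b, ζ, ζ, dist_pos.mpr hab, hζ_pos, hζ_pos,
    hζ_tendsto, hζ_tendsto, fun n i hi => twoAdicParitySeq_add_two_pow a b (even_two_mul _)
    (by omega), fun n => ?_⟩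
  have hdouble : ζ n + ζ n = 2 ^ (2 * (n + 1) + 1) := by ring
  rw [hdouble, twoAdicParitySeq_two_pow, twoAdicParitySeq_two_pow, dist_comm]
  simp

open Filter in
/-- Existence of an unpredictable sequence with values in any finite metric
space with at least two elements: there are x, ε₀ > 0 and diverging sequences
ζ_n, η_n of positive integers with x_{i+ζ_n} = x_i for all i ≤ n and
d(x_{ζ_n+η_n}, x_{η_n}) ≥ ε₀ for all n. -/
theorem exists_unpredictable {S : Type*} [MetricSpace S] [Fintype S] [Nontrivial S] :
    ∃ (x : ℕ → S) (ε₀ : ℝ) (ζ η : ℕ → ℕ), 0 < ε₀ ∧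
      (∀ n, 0 < ζ n) ∧ (∀ n, 0 < η n) ∧
      Tendsto ζ atTop atTop ∧ Tendsto η atTop atTop ∧
      (∀ n, ∀ i ≤ n, x (i + ζ n) = x i) ∧
      (∀ n, ε₀ ≤ dist (x (ζ n + η n)) (x (η n))) :=
  exists_unpredictable_general
end

section
/- If x : ℕ → S is an unpredictable sequence (in the finite-state sense), then the point x is Poisson stable for the shift map φ on F = ℕ → S: x is a limit point of its own forward orbit, i.e., there is a sequence n_k → ∞ with φ^{n_k}(x) → x in the metric δ. -/
lemma shift_iterate_apply {S : Type*} (x : ℕ → S) (n i : ℕ) :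
    (shift^[n] x) i = x (i + n) := by
  induction n generalizing x with
  | zero => rfl
  | succ n ih => rw [Function.iterate_succ_apply, ih]; rfl

section seqDist

variable {S : Type*} [MetricSpace S]

lemma seqDist_nonneg (x y : ℕ → S) : 0 ≤ seqDist x y :=
  tsum_nonneg fun _ => by positivity

lemma seqDist_le_of_forall_le_eq {C : ℝ} (hC : ∀ a b : S, dist a b ≤ C) {x y : ℕ → S}
    {N : ℕ} (h : ∀ i ≤ N, y i = x i) : seqDist y x ≤ C / 2 ^ (N + 1) := by
  set f : ℕ → ℝ := fun k => dist (y k) (x k) / 2 ^ (k + 1)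
  have hf_le : ∀ k, f k ≤ C / 2 / 2 ^ k := fun k => by
    rw [div_div, ← pow_succ']
    exact div_le_div_of_nonneg_right (hC _ _) (by positivity)
  have hf : Summable f :=
    .of_nonneg_of_le (fun _ => by positivity) hf_le (summable_geometric_two' C)
  have hhead : ∑ i ∈ Finset.range (N + 1), f i = 0 :=
    Finset.sum_eq_zero fun i hi => by
      simp [f, h i (Nat.lt_succ_iff.mp (Finset.mem_range.mp hi))]
  have htail_le : ∀ k, f (k + (N + 1)) ≤ C / 2 ^ (N + 1) / 2 / 2 ^ k := fun k => by
    rw [show C / 2 ^ (N + 1) / 2 / 2 ^ k = C / 2 ^ (k + (N + 1) + 1) by ring]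
    exact div_le_div_of_nonneg_right (hC _ _) (by positivity)
  calc seqDist y x = ∑' k, f (k + (N + 1)) := by
        rw [seqDist, ← hf.sum_add_tsum_nat_add (N + 1), hhead, zero_add]
    _ ≤ ∑' k, C / 2 ^ (N + 1) / 2 / 2 ^ k :=
        Summable.tsum_le_tsum htail_le ((summable_nat_add_iff _).mpr hf)
          (summable_geometric_two' _)
    _ = C / 2 ^ (N + 1) := tsum_geometric_two' _

end seqDist

open Filter in
lemma Unpredictable.exists_tendsto_forall_le_eq {S : Type*} [MetricSpace S] {x : ℕ → S}
    (hx : Unpredictable x) :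
    ∃ m : ℕ → ℕ, Tendsto m atTop atTop ∧ ∀ k, ∀ i ≤ k, x (i + m k) = x i := by
  obtain ⟨-, ζ, -, -, -, -, hζ, -, hagree, -⟩ := hx
  choose n hn_ge hn_eq using fun k => ((hζ.eventually_ge_atTop k).and (hagree k)).exists
  exact ⟨fun k => ζ (n k), tendsto_atTop_mono hn_ge tendsto_id, hn_eq⟩

open Filter in
/-- An unpredictable sequence is Poisson stable for the shift: it is a limit
point of its own forward orbit in the metric δ. -/
theorem unpredictable_poisson_stable {S : Type*} [MetricSpace S] [Fintype S]
    (x : ℕ → S) (hx : Unpredictable x) :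
    ∃ nk : ℕ → ℕ, Tendsto nk atTop atTop ∧
      Tendsto (fun k => seqDist (shift^[nk k] x) x) atTop (nhds 0) := by
  obtain ⟨m, hm, hm_eq⟩ := hx.exists_tendsto_forall_le_eq
  obtain ⟨C, hC⟩ := Metric.boundedSpace_iff.mp (inferInstance : BoundedSpace S)
  have hdecay : Tendsto (fun k : ℕ => C / 2 ^ (k + 1)) atTop (nhds 0) :=
    tendsto_const_nhds.div_atTop
      ((tendsto_pow_atTop_atTop_of_one_lt one_lt_two).comp (tendsto_add_atTop_nat 1))
  refine ⟨m, hm, squeeze_zero (fun _ => seqDist_nonneg _ _) (fun k => ?_) hdecay⟩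
  exact seqDist_le_of_forall_le_eq hC fun i hi => (shift_iterate_apply x _ i).trans (hm_eq k i hi)
end
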